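/- arXiv:2403.00989 — 5 statements merged into one kernel-verified Lean document; each statement's English description precedes it below -/
import Mathlib

section
/- For any probability measure P_{XY} on {-1,1}×{-1,1} with product extension P_{XY}^d, and any functions f, g: {-1,1}^d → ℝ, the expectation E[f(X^d) g(Y^d)] equals the sum over subsets S ⊆ [d] of f_S · g_S · ρ^{|S|}, where ρ is the Pearson correlation coefficient of (X,Y), f_S = E[f(X^d) φ_S(X^d)] with φ_S(x^d) = ∏_{i∈S} (x_i − μ_X)/σ_X, and g_S = E[g(Y^d) ψ_S(Y^d)] with ψ_S(y^d) = ∏_{i∈S} (y_i − μ_Y)/σ_Y. -/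
/-- The real value (±1) of a Boolean symbol. -/
def sgn (b : Bool) : ℝ := if b then 1 else -1

/-! The pmf on `{-1,1}²` is pinned down by the means and the correlation, and takes the form
`p(a,b) = p_X(a) p_Y(b) (1 + ρ φ(a) ψ(b))`. Taking the product over coordinates and expanding
`∏ (1 + ρ φ(xᵢ) ψ(yᵢ))` over subsets `S` gives `P_{XY}^d(x,y) = ∑_S P_X^d(x) φ_S(x) P_Y^d(y) ψ_S(y) ρ^|S|`,
and summing against `f(x) g(y)` separates the variables. -/

open Finset

lemma sgn_sq (a : Bool) : sgn a ^ 2 = 1 := by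
  cases a <;> norm_num [sgn]

lemma sum_mul_sub_mul_sub {α : Type*} [Fintype α] {w : α → ℝ} (hw : ∑ z, w z = 1)
    (s t : α → ℝ) :
    ∑ z, w z * ((s z - ∑ z, w z * s z) * (t z - ∑ z, w z * t z))
      = ∑ z, w z * (s z * t z) - (∑ z, w z * s z) * (∑ z, w z * t z) := by
  set μ := ∑ z, w z * s z
  set ν := ∑ z, w z * t z
  have expand : ∀ z, w z * ((s z - μ) * (t z - ν))
      = w z * (s z * t z) - μ * (w z * t z) - ν * (w z * s z) + μ * ν * w z := fun z => by ring
  simp only [expand, sum_add_distrib, sum_sub_distrib, ← mul_sum, hw]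
  ring

lemma sum_mul_sub_sq {α : Type*} [Fintype α] {w : α → ℝ} (hw : ∑ z, w z = 1)
    (s : α → ℝ) (hs : ∀ z, s z ^ 2 = 1) :
    ∑ z, w z * (s z - ∑ z, w z * s z) ^ 2 = 1 - (∑ z, w z * s z) ^ 2 := by
  simpa [← sq, hs, hw] using sum_mul_sub_mul_sub hw s s

section TwoPoint

variable {p : Bool × Bool → ℝ}

lemma marginal_fst_eq (hp : ∑ z, p z = 1) (a : Bool) :
    ∑ c, p (a, c) = (1 + sgn a * ∑ z, p z * sgn z.1) / 2 := by
  simp only [Fintype.sum_prod_type, Fintype.sum_bool, sgn] at hp ⊢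
  cases a <;> norm_num <;> linarith

lemma marginal_snd_eq (hp : ∑ z, p z = 1) (b : Bool) :
    ∑ c, p (c, b) = (1 + sgn b * ∑ z, p z * sgn z.2) / 2 := by
  simp only [Fintype.sum_prod_type, Fintype.sum_bool, sgn] at hp ⊢
  cases b <;> norm_num <;> linarith

lemma apply_eq_fourier (hp : ∑ z, p z = 1) (a b : Bool) :
    p (a, b) = (1 + sgn a * (∑ z, p z * sgn z.1) + sgn b * (∑ z, p z * sgn z.2)
      + sgn a * sgn b * ∑ z, p z * (sgn z.1 * sgn z.2)) / 4 := by
  simp only [Fintype.sum_prod_type, Fintype.sum_bool, sgn] at hp ⊢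
  cases a <;> cases b <;> norm_num <;> linarith

theorem apply_eq_marginals_mul_one_add (hp : ∑ z, p z = 1) {μX μY σX σY ρ : ℝ}
    (hμX : μX = ∑ z, p z * sgn z.1) (hμY : μY = ∑ z, p z * sgn z.2)
    (hσX : σX ^ 2 = ∑ z, p z * (sgn z.1 - μX) ^ 2) (hσX0 : σX ≠ 0)
    (hσY : σY ^ 2 = ∑ z, p z * (sgn z.2 - μY) ^ 2) (hσY0 : σY ≠ 0)
    (hρ : ρ = (∑ z, p z * ((sgn z.1 - μX) * (sgn z.2 - μY))) / (σX * σY)) (a b : Bool) :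
    p (a, b) = (∑ c, p (a, c)) * (∑ c, p (c, b))
      * (1 + ρ * ((sgn a - μX) / σX * ((sgn b - μY) / σY))) := by
  have hvarX : σX ^ 2 = 1 - μX ^ 2 := by
    rw [hσX, hμX]; exact sum_mul_sub_sq hp _ fun z => sgn_sq z.1
  have hvarY : σY ^ 2 = 1 - μY ^ 2 := by
    rw [hσY, hμY]; exact sum_mul_sub_sq hp _ fun z => sgn_sq z.2
  have hcov := sum_mul_sub_mul_sub hp (fun z => sgn z.1) (fun z => sgn z.2)
  rw [← hμX, ← hμY] at hcov
  have hPX := marginal_fst_eq hp a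
  have hPY := marginal_snd_eq hp b
  rw [← hμX] at hPX
  rw [← hμY] at hPY
  -- `(a - μ) (1 + a μ) = a (1 - μ²)` because `a² = 1`
  have hcenterX : (sgn a - μX) * ∑ c, p (a, c) = sgn a * σX ^ 2 / 2 := by
    rw [hPX, hvarX]; linear_combination (μX / 2) * sgn_sq a
  have hcenterY : (sgn b - μY) * ∑ c, p (c, b) = sgn b * σY ^ 2 / 2 := by
    rw [hPY, hvarY]; linear_combination (μY / 2) * sgn_sq b
  calc p (a, b)
      = (∑ c, p (a, c)) * (∑ c, p (c, b))
          + (∑ z, p z * (sgn z.1 * sgn z.2) - μX * μY) * sgn a * sgn b / 4 := by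
        rw [apply_eq_fourier hp, hPX, hPY, ← hμX, ← hμY]
        ring
    _ = (∑ c, p (a, c)) * (∑ c, p (c, b)) + ρ * ((sgn a - μX) * (∑ c, p (a, c)) / σX)
          * ((sgn b - μY) * (∑ c, p (c, b)) / σY) := by
        rw [hcenterX, hcenterY, hρ, hcov]
        field_simp
        ring
    _ = _ := by ring

end TwoPoint

lemma prod_mul_mul_one_add {ι R : Type*} [Fintype ι] [CommRing R] (a b u v : ι → R) (ρ : R) :
    ∏ i, a i * b i * (1 + ρ * (u i * v i))
      = ∑ S : Finset ι, ((∏ i, a i) * ∏ i ∈ S, u i) * ((∏ i, b i) * ∏ i ∈ S, v i) * ρ ^ #S := by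
  rw [prod_mul_distrib, prod_one_add, powerset_univ, mul_sum]
  refine sum_congr rfl fun S _ => ?_
  simp only [prod_mul_distrib, prod_const]
  ring

theorem stmt_2_general (d : ℕ) (p : Bool × Bool → ℝ)
    (hp : ∑ z : Bool × Bool, p z = 1)
    (μX μY σX σY ρ : ℝ)
    (hμX : μX = ∑ z : Bool × Bool, p z * sgn z.1)
    (hμY : μY = ∑ z : Bool × Bool, p z * sgn z.2)
    (hσX : σX ^ 2 = ∑ z : Bool × Bool, p z * (sgn z.1 - μX) ^ 2) (hσXpos : 0 < σX)
    (hσY : σY ^ 2 = ∑ z : Bool × Bool, p z * (sgn z.2 - μY) ^ 2) (hσYpos : 0 < σY)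
    (hρ : ρ = (∑ z : Bool × Bool, p z * ((sgn z.1 - μX) * (sgn z.2 - μY))) / (σX * σY))
    (f g : (Fin d → Bool) → ℝ) :
    ∑ x : Fin d → Bool, ∑ y : Fin d → Bool,
        (∏ i, p (x i, y i)) * (f x * g y)
      = ∑ S : Finset (Fin d),
          (∑ x : Fin d → Bool,
              (∏ i, (∑ c : Bool, p (x i, c))) * (f x * ∏ i ∈ S, (sgn (x i) - μX) / σX))
          * (∑ y : Fin d → Bool,
              (∏ i, (∑ c : Bool, p (c, y i))) * (g y * ∏ i ∈ S, (sgn (y i) - μY) / σY))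
          * ρ ^ S.card := by
  have hfactor (x y : Fin d → Bool) : ∏ i, p (x i, y i) = ∑ S : Finset (Fin d),
      ((∏ i, ∑ c, p (x i, c)) * ∏ i ∈ S, (sgn (x i) - μX) / σX)
        * ((∏ i, ∑ c, p (c, y i)) * ∏ i ∈ S, (sgn (y i) - μY) / σY) * ρ ^ #S := by
    rw [← prod_mul_mul_one_add]
    exact prod_congr rfl fun i _ => apply_eq_marginals_mul_one_add hp hμX hμY hσX hσXpos.ne'
      hσY hσYpos.ne' hρ (x i) (y i)
  calc _ = ∑ x : Fin d → Bool, ∑ y : Fin d → Bool, ∑ S : Finset (Fin d),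
          ((∏ i, ∑ c, p (x i, c)) * (f x * ∏ i ∈ S, (sgn (x i) - μX) / σX))
            * ((∏ i, ∑ c, p (c, y i)) * (g y * ∏ i ∈ S, (sgn (y i) - μY) / σY)) * ρ ^ #S := by
        refine sum_congr rfl fun x _ => sum_congr rfl fun y _ => ?_
        rw [hfactor, sum_mul]
        exact sum_congr rfl fun S _ => by ring
    _ = _ := by
        rw [sum_comm_cycle]
        simp_rw [sum_mul_sum, sum_mul]

/-- For a joint distribution on `{-1,1}²` (marginals with nonzero variance)
and its `d`-fold product, for any `f, g : {-1,1}^d → ℝ`,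
`E[f(X^d) g(Y^d)] = ∑_{S ⊆ [d]} f_S g_S ρ^{|S|}` where `f_S, g_S` are the biased Fourier
coefficients with respect to the marginals and `ρ` is the Pearson correlation of `(X,Y)`. -/
theorem stmt_2 (d : ℕ) (p : Bool × Bool → ℝ)
    (hp : ∑ z : Bool × Bool, p z = 1) (hpos : ∀ z, 0 ≤ p z)
    (μX μY σX σY ρ : ℝ)
    (hμX : μX = ∑ z : Bool × Bool, p z * sgn z.1)
    (hμY : μY = ∑ z : Bool × Bool, p z * sgn z.2)
    (hσX : σX ^ 2 = ∑ z : Bool × Bool, p z * (sgn z.1 - μX) ^ 2) (hσXpos : 0 < σX)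
    (hσY : σY ^ 2 = ∑ z : Bool × Bool, p z * (sgn z.2 - μY) ^ 2) (hσYpos : 0 < σY)
    (hρ : ρ = (∑ z : Bool × Bool, p z * ((sgn z.1 - μX) * (sgn z.2 - μY))) / (σX * σY))
    (f g : (Fin d → Bool) → ℝ) :
    ∑ x : Fin d → Bool, ∑ y : Fin d → Bool,
        (∏ i, p (x i, y i)) * (f x * g y)
      = ∑ S : Finset (Fin d),
          (∑ x : Fin d → Bool,
              (∏ i, (∑ c : Bool, p (x i, c))) * (f x * ∏ i ∈ S, (sgn (x i) - μX) / σX))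
          * (∑ y : Fin d → Bool,
              (∏ i, (∑ c : Bool, p (c, y i))) * (g y * ∏ i ∈ S, (sgn (y i) - μY) / σY))
          * ρ ^ S.card :=
  stmt_2_general d p hp μX μY σX σY ρ hμX hμY hσX hσXpos hσY hσYpos hρ f g
end

section
/- The set P(P_{XY}, Q_U, Q_V) of simulatable joint distributions with fixed marginals Q_U and Q_V is star-convex with center Q_U × Q_V: if Q_{UV} ∈ P(P_{XY}, Q_U, Q_V), then for every λ ∈ [0,1], the distribution λ·Q_{UV} + (1−λ)·Q_U Q_V is also in P(P_{XY}, Q_U, Q_V). -/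
open Filter

/-- Joint output distribution of `(f(X^d), g(Y^d))` when `(X^d, Y^d) ~ P_{XY}^d`. -/
noncomputable def outDist {X Y U V : Type*} [Fintype X] [Fintype Y]
    [DecidableEq U] [DecidableEq V]
    (p : X × Y → ℝ) (d : ℕ) (f : (Fin d → X) → U) (g : (Fin d → Y) → V) : U × V → ℝ :=
  fun uv => ∑ x : Fin d → X, ∑ y : Fin d → Y,
    if f x = uv.1 ∧ g y = uv.2 then ∏ i, p (x i, y i) else 0

/-- Total variation distance (sum of absolute differences). -/
noncomputable def dTV {W : Type*} [Fintype W] (μ ν : W → ℝ) : ℝ := ∑ w, |μ w - ν w|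

/-- A target distribution `Q` on `U × V` is simulatable from the source `P_{XY}` if there are
sequences of functions whose output distributions converge to `Q` in total variation. -/
noncomputable def Simulatable {X Y U V : Type*} [Fintype X] [Fintype Y]
    [Fintype U] [Fintype V] [DecidableEq U] [DecidableEq V]
    (p : X × Y → ℝ) (Q : U × V → ℝ) : Prop :=
  ∃ f : (d : ℕ) → (Fin d → X) → U, ∃ g : (d : ℕ) → (Fin d → Y) → V,
    Tendsto (fun d => dTV (outDist p d (f d) (g d)) Q) atTop (nhds 0)

/-
Alice spends a first block of her samples on a coin that shows `true` with probability
`α ≈ λ`. On `true` she runs her half of a protocol `(f, g)` for `Q` on the last block; otherwise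
she outputs `h` of a middle block, where `h(X^d)` has law `B ≈ Q_U`. Bob always runs `g` on
the last block, so he never needs the coin: the law `C` of his output is the `V`-marginal of
`A = law(f, g) ≈ Q`, and in the second branch it is independent of Alice's output. Since the
blocks are independent, the output law is `α A + (1 - α) B ⊗ C`, which is within
`2|α - λ| + 2 d(A, Q) + d(B, Q_U)` of `λ Q + (1 - λ) Q_U ⊗ Q_V`. Prepending unused samples does
not change an output law, so protocols of one good length give protocols of every larger
length, and "arbitrarily good for some length" already means simulatable.
-/

open Finset

section TotalVariation

variable {W : Type*} [Fintype W]

theorem dTV_nonneg (μ ν : W → ℝ) : 0 ≤ dTV μ ν :=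
  sum_nonneg fun _ _ => abs_nonneg _

theorem abs_sub_le_dTV (μ ν : W → ℝ) (w : W) : |μ w - ν w| ≤ dTV μ ν :=
  single_le_sum (f := fun w => |μ w - ν w|) (fun _ _ => abs_nonneg _) (mem_univ w)

theorem dTV_triangle (μ ν ρ : W → ℝ) : dTV μ ρ ≤ dTV μ ν + dTV ν ρ := by
  rw [dTV, dTV, dTV, ← sum_add_distrib]
  exact sum_le_sum fun w _ => abs_sub_le _ _ _

theorem dTV_le_two {μ ν : W → ℝ} (hμ : μ ∈ stdSimplex ℝ W) (hν : ν ∈ stdSimplex ℝ W) :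
    dTV μ ν ≤ 2 := calc
  dTV μ ν ≤ ∑ w, (μ w + ν w) := sum_le_sum fun w _ => by
        rw [abs_le]; constructor <;> linarith [hμ.1 w, hν.1 w]
  _ = 2 := by rw [sum_add_distrib, hμ.2, hν.2]; norm_num

theorem dTV_comp_equiv {W' : Type*} [Fintype W'] (e : W' ≃ W) (μ ν : W → ℝ) :
    dTV (μ ∘ e) (ν ∘ e) = dTV μ ν :=
  e.sum_comp fun w => |μ w - ν w|

theorem dTV_mix_eq_abs_sub_mul (μ ν : W → ℝ) (a b : ℝ) :
    dTV (fun w => a * μ w + (1 - a) * ν w) (fun w => b * μ w + (1 - b) * ν w)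
      = |a - b| * dTV μ ν := by
  rw [dTV, dTV, mul_sum]
  refine sum_congr rfl fun w _ => ?_
  rw [← abs_mul]
  ring_nf

theorem dTV_mix_le (μ μ' ν ν' : W → ℝ) {a : ℝ} (ha0 : 0 ≤ a) (ha1 : a ≤ 1) :
    dTV (fun w => a * μ w + (1 - a) * ν w) (fun w => a * μ' w + (1 - a) * ν' w)
      ≤ a * dTV μ μ' + (1 - a) * dTV ν ν' := by
  rw [dTV, dTV, dTV, mul_sum, mul_sum, ← sum_add_distrib]
  refine sum_le_sum fun w _ => ?_
  calc |a * μ w + (1 - a) * ν w - (a * μ' w + (1 - a) * ν' w)|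
      = |a * (μ w - μ' w) + (1 - a) * (ν w - ν' w)| := by ring_nf
    _ ≤ |a * (μ w - μ' w)| + |(1 - a) * (ν w - ν' w)| := abs_add_le _ _
    _ = a * |μ w - μ' w| + (1 - a) * |ν w - ν' w| := by
        rw [abs_mul, abs_mul, abs_of_nonneg ha0, abs_of_nonneg (sub_nonneg.2 ha1)]

end TotalVariation

section Marginals

variable {U V : Type*} [Fintype U] [Fintype V]

theorem fst_mem_stdSimplex {Q : U × V → ℝ} (hQ : Q ∈ stdSimplex ℝ (U × V)) :
    (fun u => ∑ v, Q (u, v)) ∈ stdSimplex ℝ U :=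
  ⟨fun _ => sum_nonneg fun _ _ => hQ.1 _, by rw [← Fintype.sum_prod_type']; exact hQ.2⟩

theorem snd_mem_stdSimplex {Q : U × V → ℝ} (hQ : Q ∈ stdSimplex ℝ (U × V)) :
    (fun v => ∑ u, Q (u, v)) ∈ stdSimplex ℝ V :=
  ⟨fun _ => sum_nonneg fun _ _ => hQ.1 _, by rw [sum_comm, ← Fintype.sum_prod_type']; exact hQ.2⟩

theorem sum_prod_mul (μ : U → ℝ) (ν : V → ℝ) :
    ∑ uv : U × V, μ uv.1 * ν uv.2 = (∑ u, μ u) * ∑ v, ν v := by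
  rw [Fintype.sum_prod_type, Fintype.sum_mul_sum]

theorem mul_mem_stdSimplex {μ : U → ℝ} {ν : V → ℝ} (hμ : μ ∈ stdSimplex ℝ U)
    (hν : ν ∈ stdSimplex ℝ V) : (fun uv : U × V => μ uv.1 * ν uv.2) ∈ stdSimplex ℝ (U × V) :=
  ⟨fun uv => mul_nonneg (hμ.1 _) (hν.1 _), by rw [sum_prod_mul, hμ.2, hν.2, one_mul]⟩

theorem dTV_snd_le (A Q : U × V → ℝ) :
    dTV (fun v => ∑ u, A (u, v)) (fun v => ∑ u, Q (u, v)) ≤ dTV A Q := by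
  rw [dTV, dTV, Fintype.sum_prod_type_right]
  refine sum_le_sum fun v _ => ?_
  rw [← sum_sub_distrib]
  exact abs_sum_le_sum_abs _ _

theorem dTV_mul_le (μ μ' : U → ℝ) (ν ν' : V → ℝ) (hμ' : μ' ∈ stdSimplex ℝ U)
    (hν : ν ∈ stdSimplex ℝ V) :
    dTV (fun uv : U × V => μ uv.1 * ν uv.2) (fun uv => μ' uv.1 * ν' uv.2)
      ≤ dTV μ μ' + dTV ν ν' := calc
  _ ≤ ∑ uv : U × V, (|μ uv.1 - μ' uv.1| * ν uv.2 + μ' uv.1 * |ν uv.2 - ν' uv.2|) :=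
      sum_le_sum fun uv _ => calc
        _ = |(μ uv.1 - μ' uv.1) * ν uv.2 + μ' uv.1 * (ν uv.2 - ν' uv.2)| := by ring_nf
        _ ≤ _ := (abs_add_le _ _).trans_eq <| by
          rw [abs_mul, abs_mul, abs_of_nonneg (hν.1 _), abs_of_nonneg (hμ'.1 _)]
  _ = dTV μ μ' + dTV ν ν' := by
      rw [sum_add_distrib, sum_prod_mul (fun u => |μ u - μ' u|) ν,
        sum_prod_mul μ' (fun v => |ν v - ν' v|), hν.2, hμ'.2, mul_one, one_mul, dTV, dTV]

end Marginals

section Protocols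

variable {X Y U V : Type*} [Fintype X] [Fintype Y] [DecidableEq U] [DecidableEq V]
  (p : X × Y → ℝ)

noncomputable def outDistX (d : ℕ) (h : (Fin d → X) → U) : U → ℝ :=
  fun u => ∑ x : Fin d → X, if h x = u then ∏ i, ∑ y, p (x i, y) else 0

noncomputable def outDistY (d : ℕ) (g : (Fin d → Y) → V) : V → ℝ :=
  fun v => ∑ y : Fin d → Y, if g y = v then ∏ i, ∑ x, p (x, y i) else 0

theorem sum_prod_sum_eq_one (hp : ∑ z, p z = 1) (d : ℕ) :
    ∑ x : Fin d → X, ∏ i, ∑ y, p (x i, y) = 1 := by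
  rw [← Fintype.prod_sum fun _ x => ∑ y, p (x, y), ← Fintype.sum_prod_type', hp, prod_const_one]

theorem sum_sum_prod_eq_one (hp : ∑ z, p z = 1) (d : ℕ) :
    ∑ x : Fin d → X, ∑ y : Fin d → Y, ∏ i, p (x i, y i) = 1 := by
  rw [← sum_prod_sum_eq_one p hp d]
  exact sum_congr rfl fun x _ => (Fintype.prod_sum fun i y => p (x i, y)).symm

theorem outDist_mem_stdSimplex [Fintype U] [Fintype V] (hp : ∑ z, p z = 1)
    (hpos : ∀ z, 0 ≤ p z) (d : ℕ) (f : (Fin d → X) → U) (g : (Fin d → Y) → V) :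
    outDist p d f g ∈ stdSimplex ℝ (U × V) := by
  refine ⟨fun _ => sum_nonneg fun _ _ => sum_nonneg fun _ _ => ?_, ?_⟩
  · split_ifs
    exacts [prod_nonneg fun _ _ => hpos _, le_rfl]
  · simp only [outDist]
    rw [sum_comm, ← sum_sum_prod_eq_one p hp d]
    refine sum_congr rfl fun x _ => ?_
    rw [sum_comm]
    simp [Fintype.sum_prod_type, ite_and]

theorem outDistX_mem_stdSimplex [Fintype U] (hp : ∑ z, p z = 1) (hpos : ∀ z, 0 ≤ p z)
    (d : ℕ) (h : (Fin d → X) → U) : outDistX p d h ∈ stdSimplex ℝ U := by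
  refine ⟨fun _ => sum_nonneg fun _ _ => ?_, ?_⟩
  · split_ifs
    exacts [prod_nonneg fun _ _ => sum_nonneg fun _ _ => hpos _, le_rfl]
  · simp only [outDistX]
    rw [sum_comm]
    simp only [sum_ite_eq, mem_univ, if_true]
    exact sum_prod_sum_eq_one p hp d

theorem sum_sum_ite_eq_outDistY {d : ℕ} (g : (Fin d → Y) → V) (v : V) :
    ∑ x : Fin d → X, ∑ y : Fin d → Y, (if g y = v then ∏ i, p (x i, y i) else 0)
      = outDistY p d g v := by
  rw [sum_comm]
  refine sum_congr rfl fun y _ => ?_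
  split_ifs
  · exact (Fintype.prod_sum fun i x => p (x, y i)).symm
  · exact sum_const_zero

theorem sum_outDist_fst [Fintype U] {d : ℕ} (f : (Fin d → X) → U) (g : (Fin d → Y) → V)
    (v : V) : ∑ u, outDist p d f g (u, v) = outDistY p d g v := by
  simp only [outDist]
  rw [sum_comm, ← sum_sum_ite_eq_outDistY p g v]
  refine sum_congr rfl fun x _ => ?_
  rw [sum_comm]
  simp [ite_and]

theorem outDist_const_fst {d : ℕ} (u₀ : U) (g : (Fin d → Y) → V) (u : U) (v : V) :
    outDist p d (fun _ => u₀) g (u, v) = if u₀ = u then outDistY p d g v else 0 := by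
  rw [← sum_sum_ite_eq_outDistY p g v]
  split_ifs with h <;> simp [outDist, h]

theorem outDist_append {a b : ℕ} (F : (Fin a → X) → (Fin b → X) → U)
    (G : (Fin b → Y) → V) :
    outDist p (a + b) (fun x => F (x ∘ Fin.castAdd b) (x ∘ Fin.natAdd a))
        (fun y => G (y ∘ Fin.natAdd a))
      = fun uv => ∑ x₀ : Fin a → X, (∏ i, ∑ y, p (x₀ i, y)) * outDist p b (F x₀) G uv := by
  funext uv
  simp only [outDist, ← (Fin.appendEquiv a b).sum_comp, Fintype.sum_prod_type,
    Fin.appendEquiv_apply, Fin.prod_univ_add, Function.comp_def, Fin.append_left,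
    Fin.append_right]
  refine sum_congr rfl fun x₀ _ => ?_
  rw [Fintype.prod_sum, sum_mul, sum_comm]
  simp only [mul_sum, mul_ite, mul_zero]

theorem outDist_comp_natAdd (hp : ∑ z, p z = 1) {a b : ℕ} (f : (Fin b → X) → U)
    (g : (Fin b → Y) → V) :
    outDist p (a + b) (fun x => f (x ∘ Fin.natAdd a)) (fun y => g (y ∘ Fin.natAdd a))
      = outDist p b f g := by
  refine (outDist_append p (fun _ => f) g).trans (funext fun uv => ?_)
  rw [← sum_mul, sum_prod_sum_eq_one p hp, one_mul]

theorem outDist_comp_castAdd_comp_natAdd {a b : ℕ} (h : (Fin a → X) → U)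
    (g : (Fin b → Y) → V) :
    outDist p (a + b) (fun x => h (x ∘ Fin.castAdd b)) (fun y => g (y ∘ Fin.natAdd a))
      = fun uv => outDistX p a h uv.1 * outDistY p b g uv.2 := by
  rw [outDist_append p (fun x₀ _ => h x₀) g]
  funext ⟨u, v⟩
  rw [outDistX, sum_mul]
  simp only [outDist_const_fst, mul_ite, mul_zero, ite_mul, zero_mul]

theorem outDist_ite (hp : ∑ z, p z = 1) {a b : ℕ} (c : (Fin a → X) → Bool)
    (f₁ f₂ : (Fin b → X) → U) (g : (Fin b → Y) → V) :
    outDist p (a + b)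
        (fun x => if c (x ∘ Fin.castAdd b) then f₁ (x ∘ Fin.natAdd a) else f₂ (x ∘ Fin.natAdd a))
        (fun y => g (y ∘ Fin.natAdd a))
      = fun uv => outDistX p a c true * outDist p b f₁ g uv
          + (1 - outDistX p a c true) * outDist p b f₂ g uv := by
  have hF : (fun x : Fin (a + b) → X =>
      if c (x ∘ Fin.castAdd b) then f₁ (x ∘ Fin.natAdd a) else f₂ (x ∘ Fin.natAdd a))
      = fun x => (if c (x ∘ Fin.castAdd b) then f₁ else f₂) (x ∘ Fin.natAdd a) :=
    funext fun x => (ite_apply _ _ _ _).symm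
  have hcompl : 1 - outDistX p a c true
      = ∑ x₀ : Fin a → X, if c x₀ = true then 0 else ∏ i, ∑ y, p (x₀ i, y) := by
    rw [← sum_prod_sum_eq_one p hp a, outDistX, ← sum_sub_distrib]
    exact sum_congr rfl fun x₀ _ => by split_ifs <;> simp
  rw [hF, outDist_append p (fun x₀ => if c x₀ then f₁ else f₂) g]
  funext uv
  rw [hcompl, outDistX, sum_mul, sum_mul, ← sum_add_distrib]
  exact sum_congr rfl fun x₀ _ => by split_ifs <;> simp

theorem simulatable_iff [Fintype U] [Fintype V] [Nonempty U] [Nonempty V]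
    (hp : ∑ z, p z = 1) (Q : U × V → ℝ) :
    Simulatable p Q ↔ ∀ ε > 0, ∃ d f g, dTV (outDist p d f g) Q ≤ ε := by
  constructor
  · rintro ⟨f, g, hfg⟩ ε hε
    obtain ⟨d, hd⟩ := (hfg.eventually (ge_mem_nhds hε)).exists
    exact ⟨d, f d, g d, hd⟩
  · intro h
    choose fg hfg using fun d => Finite.exists_min
      fun fg : ((Fin d → X) → U) × ((Fin d → Y) → V) => dTV (outDist p d fg.1 fg.2) Q
    refine ⟨fun d => (fg d).1, fun d => (fg d).2, tendsto_order.2 ⟨fun a ha =>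
      Eventually.of_forall fun d => ha.trans_le (dTV_nonneg _ _), fun a ha => ?_⟩⟩
    obtain ⟨N, f, g, hN⟩ := h (a / 2) (half_pos ha)
    filter_upwards [eventually_ge_atTop N] with d hd
    obtain ⟨r, rfl⟩ := Nat.exists_eq_add_of_le' hd
    calc dTV (outDist p (r + N) (fg (r + N)).1 (fg (r + N)).2) Q
        ≤ dTV (outDist p (r + N) (fun x => f (x ∘ Fin.natAdd r))
            (fun y => g (y ∘ Fin.natAdd r))) Q := hfg (r + N) (_, _)
      _ = dTV (outDist p N f g) Q := by rw [outDist_comp_natAdd p hp]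
      _ < a := hN.trans_lt (half_lt_self ha)

theorem exists_outDistX_dTV_le [Fintype U]
    (hsim : ∀ (n : ℕ) (q : Fin n → ℝ), (∀ i, 0 ≤ q i) → ∑ i, q i = 1 →
      ∀ ε : ℝ, 0 < ε → ∃ (d : ℕ) (h : (Fin d → X) → Fin n), dTV (outDistX p d h) q ≤ ε)
    {q : U → ℝ} (hq : q ∈ stdSimplex ℝ U) {ε : ℝ} (hε : 0 < ε) :
    ∃ (d : ℕ) (h : (Fin d → X) → U), dTV (outDistX p d h) q ≤ ε := by
  let e := Fintype.equivFin U
  obtain ⟨d, h, hh⟩ := hsim _ (q ∘ e.symm) (fun _ => hq.1 _)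
    ((e.symm.sum_comp q).trans hq.2) ε hε
  refine ⟨d, e.symm ∘ h, ?_⟩
  have hcomp : outDistX p d (e.symm ∘ h) = outDistX p d h ∘ e := by
    funext u
    simp [outDistX, e.symm_apply_eq]
  rwa [hcomp, ← dTV_comp_equiv e.symm, Function.comp_assoc, e.self_comp_symm,
    Function.comp_id]

end Protocols

section Mixture

variable {U V : Type*} [Fintype U] [Fintype V]

theorem dTV_mix_mul_le {A Q : U × V → ℝ} {B μ : U → ℝ} {C ν : V → ℝ}
    (hA : A ∈ stdSimplex ℝ (U × V)) (hB : B ∈ stdSimplex ℝ U) (hC : C ∈ stdSimplex ℝ V)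
    (hμ : μ ∈ stdSimplex ℝ U) {a b : ℝ} (hb0 : 0 ≤ b) (hb1 : b ≤ 1) :
    dTV (fun uv => a * A uv + (1 - a) * (B uv.1 * C uv.2))
        (fun uv => b * Q uv + (1 - b) * (μ uv.1 * ν uv.2))
      ≤ 2 * |a - b| + dTV A Q + dTV B μ + dTV C ν := by
  have hBC := mul_mem_stdSimplex hB hC
  have hswap := dTV_mix_eq_abs_sub_mul A (fun uv : U × V => B uv.1 * C uv.2) a b
  have hmix := dTV_mix_le A Q (fun uv : U × V => B uv.1 * C uv.2)
    (fun uv => μ uv.1 * ν uv.2) hb0 hb1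
  have hprod := dTV_mul_le B μ C ν hμ hC
  have hAQ := dTV_nonneg A Q
  have hBμ := dTV_nonneg B μ
  have hCν := dTV_nonneg C ν
  calc _ ≤ _ := dTV_triangle _ (fun uv => b * A uv + (1 - b) * (B uv.1 * C uv.2)) _
    _ ≤ |a - b| * 2 + (b * dTV A Q + (1 - b) * (dTV B μ + dTV C ν)) := by
        rw [hswap]
        gcongr
        exacts [dTV_le_two hA hBC, hmix.trans (by gcongr)]
    _ ≤ _ := by nlinarith

theorem sum_mix_mul_snd {Q : U × V → ℝ} (hQ : ∑ z, Q z = 1) (lam : ℝ) (u : U) :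
    ∑ v, (lam * Q (u, v) + (1 - lam) * ((∑ v', Q (u, v')) * ∑ u', Q (u', v)))
      = ∑ v, Q (u, v) := by
  rw [sum_add_distrib, ← mul_sum, ← mul_sum, ← mul_sum, sum_comm, ← Fintype.sum_prod_type', hQ]
  ring

theorem sum_mix_mul_fst {Q : U × V → ℝ} (hQ : ∑ z, Q z = 1) (lam : ℝ) (v : V) :
    ∑ u, (lam * Q (u, v) + (1 - lam) * ((∑ v', Q (u, v')) * ∑ u', Q (u', v)))
      = ∑ u, Q (u, v) := by
  rw [sum_add_distrib, ← mul_sum, ← mul_sum, ← sum_mul, ← Fintype.sum_prod_type', hQ]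
  ring

end Mixture

theorem stmt_5_general {X Y U V : Type*} [Fintype X] [Fintype Y] [Fintype U] [Fintype V]
    [DecidableEq U] [DecidableEq V]
    (p : X × Y → ℝ) (hp : ∑ z : X × Y, p z = 1) (hpos : ∀ z, 0 ≤ p z)
    (hsimX : ∀ (n : ℕ) (q : Fin n → ℝ), (∀ i, 0 ≤ q i) → (∑ i, q i = 1) →
      ∀ ε : ℝ, 0 < ε → ∃ d : ℕ, ∃ h : (Fin d → X) → Fin n,
        dTV (fun i => ∑ x : Fin d → X,
          if h x = i then ∏ j, (∑ y : Y, p (x j, y)) else 0) q ≤ ε)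
    (Q : U × V → ℝ) (hQpos : ∀ z, 0 ≤ Q z) (hQ1 : ∑ z : U × V, Q z = 1)
    (hQ : Simulatable p Q)
    (lam : ℝ) (hlam0 : 0 ≤ lam) (hlam1 : lam ≤ 1) :
    Simulatable p (fun uv =>
        lam * Q uv + (1 - lam) * ((∑ v : V, Q (uv.1, v)) * (∑ u : U, Q (u, uv.2)))) ∧
    (∀ u : U, ∑ v : V, (lam * Q (u, v)
        + (1 - lam) * ((∑ v' : V, Q (u, v')) * (∑ u' : U, Q (u', v))))
      = ∑ v : V, Q (u, v)) ∧
    (∀ v : V, ∑ u : U, (lam * Q (u, v)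
        + (1 - lam) * ((∑ v' : V, Q (u, v')) * (∑ u' : U, Q (u', v))))
      = ∑ u : U, Q (u, v)) := by
  have hQs : Q ∈ stdSimplex ℝ (U × V) := ⟨hQpos, hQ1⟩
  obtain ⟨⟨u₀, v₀⟩, -, -⟩ := exists_ne_zero_of_sum_ne_zero (hQ1.trans_ne one_ne_zero)
  have : Nonempty U := ⟨u₀⟩
  have : Nonempty V := ⟨v₀⟩
  refine ⟨(simulatable_iff p hp _).2 fun ε hε => ?_, sum_mix_mul_snd hQ1 lam,
    sum_mix_mul_fst hQ1 lam⟩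
  have hε5 : 0 < ε / 5 := by positivity
  obtain ⟨d₁, f, g, hfg⟩ := (simulatable_iff p hp Q).1 hQ _ hε5
  let coin : Bool → ℝ := fun b => if b then lam else 1 - lam
  have hcoin : coin ∈ stdSimplex ℝ Bool :=
    ⟨fun b => by cases b <;> simp [coin] <;> linarith, by simp [coin]⟩
  obtain ⟨d₀, c, hc⟩ := exists_outDistX_dTV_le p hsimX hcoin hε5
  obtain ⟨d₂, h, hh⟩ := exists_outDistX_dTV_le p hsimX (fst_mem_stdSimplex hQs) hε5
  have hY : outDistY p d₁ g = fun v => ∑ u, outDist p d₁ f g (u, v) :=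
    funext fun v => (sum_outDist_fst p f g v).symm
  have hout := outDist_ite p hp c (fun x => f (x ∘ Fin.natAdd d₂))
    (fun x => h (x ∘ Fin.castAdd d₁)) (fun y => g (y ∘ Fin.natAdd d₂))
  rw [outDist_comp_natAdd p hp, outDist_comp_castAdd_comp_natAdd] at hout
  refine ⟨d₀ + (d₂ + d₁), _, _, (congrArg (dTV · _) hout).trans_le ?_⟩
  have hα : |outDistX p d₀ c true - lam| ≤ _ := abs_sub_le_dTV _ coin true
  have hgY : dTV (outDistY p d₁ g) _ ≤ _ := hY ▸ dTV_snd_le (outDist p d₁ f g) Q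
  calc _ ≤ _ := dTV_mix_mul_le (μ := fun u => ∑ v, Q (u, v)) (ν := fun v => ∑ u, Q (u, v))
        (outDist_mem_stdSimplex p hp hpos d₁ f g) (outDistX_mem_stdSimplex p hp hpos d₂ h)
        (hY ▸ snd_mem_stdSimplex (outDist_mem_stdSimplex p hp hpos d₁ f g))
        (fst_mem_stdSimplex hQs) hlam0 hlam1
    _ ≤ ε := by linarith

/-- Star-convexity of the set of simulatable distributions with fixed marginals,
with center the product of the marginals: if `Q` is simulatable then for every `λ ∈ [0,1]` so is
`λ·Q + (1−λ)·Q_U Q_V`, and the mixture has the same marginals as `Q`.  The hypotheses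
`hsimX, hsimY` state that each agent can simulate any finite-alphabet marginal distribution
arbitrarily well from its i.i.d. samples (standard source simulation). -/
theorem stmt_5 {X Y U V : Type*} [Fintype X] [Fintype Y] [Fintype U] [Fintype V]
    [DecidableEq U] [DecidableEq V]
    (p : X × Y → ℝ) (hp : ∑ z : X × Y, p z = 1) (hpos : ∀ z, 0 ≤ p z)
    (hsimX : ∀ (n : ℕ) (q : Fin n → ℝ), (∀ i, 0 ≤ q i) → (∑ i, q i = 1) →
      ∀ ε : ℝ, 0 < ε → ∃ d : ℕ, ∃ h : (Fin d → X) → Fin n,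
        dTV (fun i => ∑ x : Fin d → X,
          if h x = i then ∏ j, (∑ y : Y, p (x j, y)) else 0) q ≤ ε)
    (hsimY : ∀ (n : ℕ) (q : Fin n → ℝ), (∀ i, 0 ≤ q i) → (∑ i, q i = 1) →
      ∀ ε : ℝ, 0 < ε → ∃ d : ℕ, ∃ h : (Fin d → Y) → Fin n,
        dTV (fun i => ∑ y : Fin d → Y,
          if h y = i then ∏ j, (∑ x : X, p (x, y j)) else 0) q ≤ ε)
    (Q : U × V → ℝ) (hQpos : ∀ z, 0 ≤ Q z) (hQ1 : ∑ z : U × V, Q z = 1)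
    (hQ : Simulatable p Q)
    (lam : ℝ) (hlam0 : 0 ≤ lam) (hlam1 : lam ≤ 1) :
    Simulatable p (fun uv =>
        lam * Q uv + (1 - lam) * ((∑ v : V, Q (uv.1, v)) * (∑ u : U, Q (u, uv.2)))) ∧
    (∀ u : U, ∑ v : V, (lam * Q (u, v)
        + (1 - lam) * ((∑ v' : V, Q (u, v')) * (∑ u' : U, Q (u', v))))
      = ∑ v : V, Q (u, v)) ∧
    (∀ v : V, ∑ u : U, (lam * Q (u, v)
        + (1 - lam) * ((∑ v' : V, Q (u, v')) * (∑ u' : U, Q (u', v))))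
      = ∑ u : U, Q (u, v)) :=
  stmt_5_general p hp hpos hsimX Q hQpos hQ1 hQ lam hlam0 hlam1
end

section
/- Let f, g and f', g' be functions {-1,1}^d → {-1,1} with distance spectra S(f,g) = (n_0,…,n_d) and S(f',g') = (n'_0,…,n'_d), where n_k = |{(x^d,y^d): d_H(x^d,y^d)=k, f(x^d)=g(y^d)=1}|, and suppose all four functions have the same output biases. If the cumulative sums satisfy Σ_{k≤ℓ} n_k ≤ Σ_{k≤ℓ} n'_k for all ℓ ∈ [d], then under the doubly-symmetric binary source with ρ ∈ (0,1) and uniform marginals, E[f(X^d) g(Y^d)] ≤ E[f'(X^d) g'(Y^d)]. -/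
/-!
Write `F = 2·1_A - 1` and `G = 2·1_B - 1`. Every row and column of the kernel
`w (hammingDist x y)` has the same sum, since a coordinatewise swap of `β` moves `x` to any
other point while preserving Hamming distances; hence `E[F G]` equals `4 ∑ₖ nₖ wₖ` plus terms
depending only on `|A|` and `|B|`. For the doubly symmetric binary source
`wₖ = ((1+ρ)/4)^(d-k) ((1-ρ)/4)^k` is nonnegative and decreasing in `k`, so Abel summation turns
domination of the cumulative spectrum into domination of `∑ₖ nₖ wₖ`.
-/

open Finset

theorem sum_range_mul_le_of_partialSums_le {R : Type*} [CommRing R] [PartialOrder R]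
    [IsOrderedRing R] {a b w : ℕ → R} {n : ℕ}
    (hw : ∀ k < n, w (k + 1) ≤ w k) (hwn : 0 ≤ w n)
    (hab : ∀ ℓ ≤ n, ∑ k ∈ range (ℓ + 1), a k ≤ ∑ k ∈ range (ℓ + 1), b k) :
    ∑ k ∈ range (n + 1), a k * w k ≤ ∑ k ∈ range (n + 1), b k * w k := by
  have abel := fun c : ℕ → R => by
    simpa only [smul_eq_mul, Nat.add_sub_cancel, mul_comm (w _)] using
      sum_range_by_parts w c (n + 1)
  rw [abel a, abel b]
  refine sub_le_sub (mul_le_mul_of_nonneg_right (hab n le_rfl) hwn)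
    (sum_le_sum fun k hk => mul_le_mul_of_nonpos_left (hab k (mem_range.mp hk).le) ?_)
  exact sub_nonpos.mpr (hw k (mem_range.mp hk))

theorem pow_sub_succ_mul_pow_succ_le {R : Type*} [CommSemiring R] [PartialOrder R]
    [IsOrderedRing R] {p q : R} (hq : 0 ≤ q) (hqp : q ≤ p) {n k : ℕ} (hk : k < n) :
    p ^ (n - (k + 1)) * q ^ (k + 1) ≤ p ^ (n - k) * q ^ k := by
  obtain ⟨m, rfl⟩ := Nat.exists_eq_add_of_lt hk
  rw [show k + m + 1 - k = m + 1 by omega, show k + m + 1 - (k + 1) = m by omega,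
    pow_succ, pow_succ, mul_assoc, mul_comm p]
  exact mul_le_mul_of_nonneg_left (mul_le_mul_of_nonneg_left hqp (pow_nonneg hq k))
    (pow_nonneg (hq.trans hqp) m)

section Hamming

variable {ι β : Type*} [Fintype ι] [DecidableEq β]

theorem prod_ite_eq_pow_mul_pow_hammingDist {M : Type*} [CommMonoid M] (p q : M)
    (x y : ι → β) :
    ∏ i, (if x i = y i then p else q)
      = p ^ (Fintype.card ι - hammingDist x y) * q ^ hammingDist x y := by
  have hcard := card_filter_add_card_filter_not (s := univ) (fun i => x i = y i)
  rw [prod_ite, prod_const, prod_const, Nat.eq_sub_of_add_eq hcard, card_univ]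
  rfl

variable [DecidableEq ι] [Fintype β]

theorem sum_comp_hammingDist_left_eq {M : Type*} [AddCommMonoid M] (φ : ℕ → M)
    (x x' : ι → β) : ∑ y, φ (hammingDist x y) = ∑ y, φ (hammingDist x' y) := by
  refine Fintype.sum_equiv (Equiv.piCongrRight fun i => Equiv.swap (x i) (x' i)) _ _
    fun y => congrArg φ (congrArg card (filter_congr fun i _ => ?_))
  rw [Equiv.piCongrRight_apply, Pi.map_apply, ne_eq, ne_eq, not_iff_not, eq_comm (a := x' i),
    Equiv.swap_apply_eq_iff, Equiv.swap_apply_right, eq_comm]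

def distanceSpectrum (P Q : (ι → β) → Prop) [DecidablePred P] [DecidablePred Q] (k : ℕ) : ℕ :=
  #{xy : (ι → β) × (ι → β) | hammingDist xy.1 xy.2 = k ∧ P xy.1 ∧ Q xy.2}

theorem sum_sum_ite_and_comp_hammingDist {M : Type*} [AddCommMonoid M]
    (P Q : (ι → β) → Prop) [DecidablePred P] [DecidablePred Q] (φ : ℕ → M) :
    ∑ x, ∑ y, (if P x ∧ Q y then φ (hammingDist x y) else 0)
      = ∑ k ∈ range (Fintype.card ι + 1), distanceSpectrum P Q k • φ k := by
  have hmaps : ∀ xy ∈ ({xy | P xy.1 ∧ Q xy.2} : Finset ((ι → β) × (ι → β))),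
      hammingDist xy.1 xy.2 ∈ range (Fintype.card ι + 1) :=
    fun _ _ => mem_range_succ_iff.mpr hammingDist_le_card_fintype
  rw [← Fintype.sum_prod_type' (f := fun x y => if P x ∧ Q y then φ (hammingDist x y) else 0),
    ← sum_filter, ← sum_fiberwise_of_maps_to hmaps]
  refine sum_congr rfl fun k _ => ?_
  rw [distanceSpectrum, ← sum_const, filter_filter]
  exact sum_congr (filter_congr fun _ _ => by tauto) fun xy hxy => by
    rw [(mem_filter.mp hxy).2.1]

theorem sum_sum_ite_comp_hammingDist {M : Type*} [AddCommMonoid M] (P : (ι → β) → Prop)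
    [DecidablePred P] (φ : ℕ → M) (x₀ : ι → β) :
    ∑ x, ∑ y, (if P x then φ (hammingDist x y) else 0)
      = #{x | P x} • ∑ y, φ (hammingDist x₀ y) := by
  simp_rw [← ite_sum_zero]
  rw [← sum_filter, ← sum_const]
  exact sum_congr rfl fun x _ => sum_comp_hammingDist_left_eq φ x x₀

theorem sum_sum_comp_hammingDist_mul_eq_of_sign (w : ℕ → ℝ) (F G : (ι → β) → ℝ)
    (hF : ∀ x, F x = 1 ∨ F x = -1) (hG : ∀ y, G y = 1 ∨ G y = -1) (x₀ : ι → β) :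
    ∑ x, ∑ y, w (hammingDist x y) * (F x * G y)
      = 4 * ∑ k ∈ range (Fintype.card ι + 1), (distanceSpectrum (F · = 1) (G · = 1) k : ℝ) * w k
        - 2 * (#{x | F x = 1} + #{y | G y = 1}) * ∑ y, w (hammingDist x₀ y)
        + Fintype.card (ι → β) * ∑ y, w (hammingDist x₀ y) := by
  have hpoint : ∀ x y, w (hammingDist x y) * (F x * G y)
      = 4 * (if F x = 1 ∧ G y = 1 then w (hammingDist x y) else 0)
        - 2 * (if F x = 1 then w (hammingDist x y) else 0)
        - 2 * (if G y = 1 then w (hammingDist y x) else 0) + w (hammingDist x y) := by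
    intro x y
    rw [hammingDist_comm y x]
    rcases hF x with hx | hx <;> rcases hG y with hy | hy <;> norm_num [hx, hy] <;> ring
  have hcols : ∑ x, ∑ y, (if G y = 1 then w (hammingDist y x) else 0)
      = #{y | G y = 1} • ∑ y, w (hammingDist x₀ y) := by
    rw [sum_comm, sum_sum_ite_comp_hammingDist]
  simp only [hpoint, sum_add_distrib, sum_sub_distrib, ← mul_sum,
    sum_sum_ite_and_comp_hammingDist, sum_sum_ite_comp_hammingDist _ _ x₀, hcols,
    sum_comp_hammingDist_left_eq w _ x₀, sum_const, card_univ, nsmul_eq_mul]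
  ring

end Hamming

/-- If the distance spectrum of `(f',g')` dominates that of `(f,g)` in cumulative
sums, and both pairs have the same output biases, then under the doubly-symmetric binary
source with correlation `ρ ∈ (0,1)`, `E[f(X^d)g(Y^d)] ≤ E[f'(X^d)g'(Y^d)]`. -/
theorem stmt_11 (d : ℕ) (ρ : ℝ) (hρ0 : 0 < ρ) (hρ1 : ρ < 1)
    (f g f' g' : (Fin d → Bool) → ℝ)
    (hf : ∀ x, f x = 1 ∨ f x = -1) (hg : ∀ y, g y = 1 ∨ g y = -1)
    (hf' : ∀ x, f' x = 1 ∨ f' x = -1) (hg' : ∀ y, g' y = 1 ∨ g' y = -1)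
    (hbiasf : (Finset.univ.filter fun x : Fin d → Bool => f x = 1).card
      = (Finset.univ.filter fun x : Fin d → Bool => f' x = 1).card)
    (hbiasg : (Finset.univ.filter fun y : Fin d → Bool => g y = 1).card
      = (Finset.univ.filter fun y : Fin d → Bool => g' y = 1).card)
    (hdom : ∀ ℓ : ℕ, ℓ ≤ d →
      ∑ k ∈ Finset.range (ℓ + 1),
          (Finset.univ.filter fun xy : (Fin d → Bool) × (Fin d → Bool) =>
            hammingDist xy.1 xy.2 = k ∧ f xy.1 = 1 ∧ g xy.2 = 1).card
        ≤ ∑ k ∈ Finset.range (ℓ + 1),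
          (Finset.univ.filter fun xy : (Fin d → Bool) × (Fin d → Bool) =>
            hammingDist xy.1 xy.2 = k ∧ f' xy.1 = 1 ∧ g' xy.2 = 1).card) :
    ∑ x : Fin d → Bool, ∑ y : Fin d → Bool,
        (∏ i, if x i = y i then (1 + ρ) / 4 else (1 - ρ) / 4) * (f x * g y)
      ≤ ∑ x : Fin d → Bool, ∑ y : Fin d → Bool,
          (∏ i, if x i = y i then (1 + ρ) / 4 else (1 - ρ) / 4) * (f' x * g' y) := by
  set w : ℕ → ℝ := fun k => ((1 + ρ) / 4) ^ (d - k) * ((1 - ρ) / 4) ^ k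
  have hkernel : ∀ x y : Fin d → Bool,
      (∏ i, if x i = y i then (1 + ρ) / 4 else (1 - ρ) / 4) = w (hammingDist x y) := by
    simpa using
      prod_ite_eq_pow_mul_pow_hammingDist (ι := Fin d) (β := Bool) ((1 + ρ) / 4) ((1 - ρ) / 4)
  simp only [hkernel]
  rw [sum_sum_comp_hammingDist_mul_eq_of_sign w f g hf hg default,
    sum_sum_comp_hammingDist_mul_eq_of_sign w f' g' hf' hg' default, hbiasf, hbiasg,
    Fintype.card_fin]
  gcongr 4 * ?_ - _ + _
  have hq : 0 ≤ (1 - ρ) / 4 := by linarith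
  refine sum_range_mul_le_of_partialSums_le (fun k hk => ?_) ?_ fun ℓ hℓ => ?_
  · exact pow_sub_succ_mul_pow_succ_le hq (by linarith) hk
  · exact mul_nonneg (pow_nonneg (by linarith) _) (pow_nonneg hq _)
  · exact_mod_cast hdom ℓ hℓ
end

section
/- Under the uniform product measure on {-1,1}^d, the bit-flip map preserves measure and hence the projection operator Ξ_k preserves the mean: for any f: {-1,1}^d → {-1,1} and k ∈ [d], E[Ξ_k(f)(X^d)] = E[f(X^d)], where Ξ_k(f)(x^d) = 1 if (x_k = −1 and (f(x^d) = 1 or f(ξ_k(x^d)) = 1)) or (x_k = 1 and f(x^d) = 1 and f(ξ_k(x^d)) = 1), and Ξ_k(f)(x^d) = −1 otherwise, with ξ_k flipping the k-th coordinate. -/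
/-!
Pair each point `x` with `ξ_k x`. On such a pair, `Ξ_k f` takes the value `max (f x) (f (ξ_k x))`
at the point with `x_k = -1` and `min (f x) (f (ξ_k x))` at the point with `x_k = 1`, and
`max a b + min a b = a + b`; so `Ξ_k f` and `f` have the same sum over every pair, hence the same
mean.
-/

open Function

theorem Finset.sum_eq_of_add_comp_involutive {α M : Type*} [Fintype α] [AddCommMonoid M]
    [IsAddTorsionFree M] {σ : α → α} (hσ : Involutive σ) {g h : α → M}
    (hgh : ∀ x, g x + g (σ x) = h x + h (σ x)) :
    ∑ x, g x = ∑ x, h x := by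
  have hsum (u : α → M) : 2 • ∑ x, u x = ∑ x, (u x + u (σ x)) := by
    rw [two_nsmul, Finset.sum_add_distrib]
    exact congrArg _ (Equiv.sum_comp (hσ.toPerm σ) u).symm
  exact nsmul_right_injective two_ne_zero (by simp only [hsum, hgh])

section BitFlip

variable {ι : Type*} [DecidableEq ι]

def flipAt (k : ι) (x : ι → Bool) : ι → Bool :=
  update x k (!x k)

@[simp]
theorem flipAt_apply_self (k : ι) (x : ι → Bool) : flipAt k x k = !x k :=
  update_self k _ x

theorem flipAt_involutive (k : ι) : Involutive (flipAt k) := fun x => by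
  rw [flipAt, flipAt_apply_self, Bool.not_not, flipAt, update_idem, update_eq_self]

/-- The paper's `Ξ_k f`. -/
noncomputable def bitProjection (k : ι) (f : (ι → Bool) → ℝ) (x : ι → Bool) : ℝ :=
  if (x k = false ∧ (f x = 1 ∨ f (flipAt k x) = 1)) ∨
      (x k = true ∧ f x = 1 ∧ f (flipAt k x) = 1)
    then 1 else -1

variable {k : ι} {f : (ι → Bool) → ℝ}

theorem bitProjection_eq_max_min (hf : ∀ x, f x = 1 ∨ f x = -1) (x : ι → Bool) :
    bitProjection k f x =
      if x k then min (f x) (f (flipAt k x)) else max (f x) (f (flipAt k x)) := by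
  rcases hf x with h₁ | h₁ <;> rcases hf (flipAt k x) with h₂ | h₂ <;>
    cases hk : x k <;> norm_num [bitProjection, h₁, h₂, hk]

theorem bitProjection_add_flipAt (hf : ∀ x, f x = 1 ∨ f x = -1) (x : ι → Bool) :
    bitProjection k f x + bitProjection k f (flipAt k x) = f x + f (flipAt k x) := by
  rw [bitProjection_eq_max_min hf, bitProjection_eq_max_min hf, flipAt_involutive k x,
    flipAt_apply_self]
  cases x k
  · rw [Bool.not_false, if_neg Bool.false_ne_true, if_pos rfl, min_comm, max_add_min]
  · rw [Bool.not_true, if_pos rfl, if_neg Bool.false_ne_true, max_comm, min_add_max]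

end BitFlip

/-- Bits are encoded as `Bool` with `false ↔ -1`, and the expectation under the uniform measure
on `{-1,1}^d` is the average over `Fin d → Bool`. -/
theorem stmt_13 (d : ℕ) (k : Fin d) (f : (Fin d → Bool) → ℝ)
    (hf : ∀ x, f x = 1 ∨ f x = -1) :
    ((2 : ℝ) ^ d)⁻¹ * ∑ x : Fin d → Bool,
        (if (x k = false ∧ (f x = 1 ∨ f (Function.update x k (!x k)) = 1)) ∨
            (x k = true ∧ f x = 1 ∧ f (Function.update x k (!x k)) = 1)
          then (1 : ℝ) else -1)
      = ((2 : ℝ) ^ d)⁻¹ * ∑ x : Fin d → Bool, f x :=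
  congrArg _ <| Finset.sum_eq_of_add_comp_involutive (flipAt_involutive k)
    (bitProjection_add_flipAt hf)
end

section
/- In the NISS scenario where two agents share one uniform common random bit Z and have unlimited independent local randomness, the set of simulatable joint distributions of binary outputs (U,V) with P(U=1)=a and P(V=1)=b is exactly the set of Q_{UV} satisfying (2 − ζ − β)/2 ≤ Q(U=V) ≤ (2 − ζ + β)/2, where ζ = 1 − (2a−1)(2b−1) and β = min{2a, 2(1−a)}·min{2b, 2(1−b)}. -/
open Filter

/-- Output distribution when each agent applies a function to the shared uniform bit `Z`
and its own `dd` local i.i.d. fair bits (all `2dd+1` bits uniform and independent). -/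
noncomputable def outDistCR (dd : ℕ) (f g : Bool × (Fin dd → Bool) → Bool) :
    Bool × Bool → ℝ :=
  fun uv => ((2 : ℝ) ^ (2 * dd + 1))⁻¹ *
    ((Finset.univ.filter fun zxy : Bool × (Fin dd → Bool) × (Fin dd → Bool) =>
      f (zxy.1, zxy.2.1) = uv.1 ∧ g (zxy.1, zxy.2.2) = uv.2).card : ℝ)

/-- Total variation distance on `Bool × Bool`. -/
noncomputable def dTVCR (μ ν : Bool × Bool → ℝ) : ℝ := ∑ w : Bool × Bool, |μ w - ν w|

/-- `Q` is simulatable with one common uniform bit and unlimited local randomness. -/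
noncomputable def SimulatableCR (Q : Bool × Bool → ℝ) : Prop :=
  ∃ f : (dd : ℕ) → Bool × (Fin dd → Bool) → Bool,
  ∃ g : (dd : ℕ) → Bool × (Fin dd → Bool) → Bool,
    Tendsto (fun dd => dTVCR (outDistCR dd (f dd) (g dd)) Q) atTop (nhds 0)

/-!
Given the common bit `z`, the two outputs are independent, with `P(U = 1 | z) = p z` and
`P(V = 1 | z) = q z`; so the law of `(U, V)` is the mixture `½ ∑_z Ber(p z) ⊗ Ber(q z)`,
with dyadic parameters for `d` local bits, and with arbitrary parameters in `[0, 1]` in the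
limit. For such a mixture `P(U = 1, V = 1) - a b = (p₁ - p₂)(q₁ - q₂)/4`, and
`|p₁ - p₂| ≤ min (2a) (2(1 - a))` because `p₁, p₂ ∈ [0, 1]` average to `a`. Conversely every
covariance within this bound is reached by taking `p₁ - p₂ = min (2a) (2(1 - a))`. The bound
is a closed condition on `Q`, so it passes to limits of simulated laws.
-/

open Finset Topology

noncomputable def bern (p : ℝ) (u : Bool) : ℝ := cond u p (1 - p)

noncomputable def condIndepDist (p q : Bool → ℝ) : Bool × Bool → ℝ :=
  fun uv => (∑ z : Bool, bern (p z) uv.1 * bern (q z) uv.2) / 2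

def fstMarginal (Q : Bool × Bool → ℝ) : ℝ := Q (true, true) + Q (true, false)

def sndMarginal (Q : Bool × Bool → ℝ) : ℝ := Q (true, true) + Q (false, true)

def spread (a : ℝ) : ℝ := min (2 * a) (2 * (1 - a))

-- The paper's bound `(2 - ζ - β)/2 ≤ Q(U = V) ≤ (2 - ζ + β)/2`, rewritten with
-- `Q(U = V) = 1 - a - b + 2 Q(1, 1)` and `2 - ζ = 1 + (2a - 1)(2b - 1)`.
def CovBounded (Q : Bool × Bool → ℝ) : Prop :=
  |Q (true, true) - fstMarginal Q * sndMarginal Q| ≤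
    spread (fstMarginal Q) * spread (sndMarginal Q) / 4

noncomputable def probTrue {d : ℕ} (f : Bool × (Fin d → Bool) → Bool) (z : Bool) : ℝ :=
  #{x | f (z, x) = true} / 2 ^ d

lemma card_filter_eq_mul_bern {α : Type*} [Fintype α] (h : α → Bool) (u : Bool) :
    (#{x | h x = u} : ℝ) = Fintype.card α * bern (#{x | h x = true} / Fintype.card α) u := by
  rcases isEmpty_or_nonempty α with hα | hα
  · simp
  have hcard : (Fintype.card α : ℝ) ≠ 0 := by positivity
  cases u
  · have hsplit := card_filter_add_card_filter_not (s := univ) (fun x => h x = true)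
    simp only [Bool.not_eq_true, card_univ] at hsplit
    rw [bern, cond_false, mul_sub, mul_div_cancel₀ _ hcard, ← hsplit]
    push_cast
    ring
  · rw [bern, cond_true, mul_div_cancel₀ _ hcard]

lemma card_filter_commonBit {α β : Type*} [Fintype α] [Fintype β]
    (f : Bool × α → Bool) (g : Bool × β → Bool) (u v : Bool) :
    #{zxy : Bool × α × β | f (zxy.1, zxy.2.1) = u ∧ g (zxy.1, zxy.2.2) = v} =
      ∑ z : Bool, #{x | f (z, x) = u} * #{y | g (z, y) = v} := by
  simp only [card_filter, Fintype.sum_prod_type, sum_mul_sum, ite_zero_mul_ite_zero, mul_one]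

lemma outDistCR_eq_condIndepDist (d : ℕ) (f g : Bool × (Fin d → Bool) → Bool) :
    outDistCR d f g = condIndepDist (probTrue f) (probTrue g) := by
  have hcard : (Fintype.card (Fin d → Bool) : ℝ) = 2 ^ d := by simp
  have hfactor : ∀ u v z, (#{x | f (z, x) = u} * #{y | g (z, y) = v} : ℝ) =
      2 ^ d * 2 ^ d * (bern (probTrue f z) u * bern (probTrue g z) v) := by
    intro u v z
    rw [card_filter_eq_mul_bern (fun x => f (z, x)) u,
      card_filter_eq_mul_bern (fun y => g (z, y)) v, hcard]
    simp only [probTrue]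
    ring
  ext ⟨u, v⟩
  rw [outDistCR, card_filter_commonBit]
  push_cast
  simp_rw [hfactor u v, condIndepDist, ← mul_sum]
  field_simp
  ring

lemma probTrue_mem_Icc {d : ℕ} (f : Bool × (Fin d → Bool) → Bool) (z : Bool) :
    probTrue f z ∈ Set.Icc 0 1 := by
  refine ⟨by unfold probTrue; positivity, div_le_one_of_le₀ ?_ (by positivity)⟩
  exact_mod_cast (card_filter_le _ _).trans_eq (by simp)

lemma tendsto_dTVCR_zero_iff {ι : Type*} {l : Filter ι} (μ : ι → Bool × Bool → ℝ)
    (ν : Bool × Bool → ℝ) :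
    Tendsto (fun n => dTVCR (μ n) ν) l (𝓝 0) ↔ Tendsto μ l (𝓝 ν) := by
  rw [tendsto_pi_nhds]
  unfold dTVCR
  constructor
  · intro h w
    refine tendsto_sub_nhds_zero_iff.mp (squeeze_zero_norm (fun n => ?_) h)
    exact single_le_sum (f := fun w => |μ n w - ν w|) (fun _ _ => abs_nonneg _) (mem_univ w)
  · intro h
    simpa using tendsto_finsetSum univ fun w _ => ((h w).sub_const (ν w)).abs

lemma abs_sub_le_spread {p₁ p₂ : ℝ} (h₁ : p₁ ∈ Set.Icc 0 1) (h₂ : p₂ ∈ Set.Icc 0 1) :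
    |p₁ - p₂| ≤ spread ((p₁ + p₂) / 2) := by
  obtain ⟨h₁₀, h₁₁⟩ := h₁
  obtain ⟨h₂₀, h₂₁⟩ := h₂
  rw [spread, abs_sub_le_iff, le_min_iff, le_min_iff]
  constructor <;> constructor <;> linarith

lemma covBounded_condIndepDist {p q : Bool → ℝ} (hp : ∀ z, p z ∈ Set.Icc 0 1)
    (hq : ∀ z, q z ∈ Set.Icc 0 1) : CovBounded (condIndepDist p q) := by
  have hcov : condIndepDist p q (true, true) -
      fstMarginal (condIndepDist p q) * sndMarginal (condIndepDist p q) =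
      (p true - p false) * (q true - q false) / 4 := by
    simp only [condIndepDist, fstMarginal, sndMarginal, bern, Fintype.sum_bool, cond_true,
      cond_false]
    ring
  have hfst : fstMarginal (condIndepDist p q) = (p true + p false) / 2 := by
    simp only [condIndepDist, fstMarginal, bern, Fintype.sum_bool, cond_true, cond_false]
    ring
  have hsnd : sndMarginal (condIndepDist p q) = (q true + q false) / 2 := by
    simp only [condIndepDist, sndMarginal, bern, Fintype.sum_bool, cond_true, cond_false]
    ring
  have hp' := abs_sub_le_spread (hp true) (hp false)
  have hq' := abs_sub_le_spread (hq true) (hq false)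
  rw [CovBounded, hcov, hfst, hsnd, abs_div, abs_mul, abs_of_pos (four_pos : (0 : ℝ) < 4)]
  exact div_le_div_of_nonneg_right
    (mul_le_mul hp' hq' (abs_nonneg _) ((abs_nonneg _).trans hp')) zero_le_four

lemma isClosed_setOf_covBounded : IsClosed {Q | CovBounded Q} := by
  unfold CovBounded fstMarginal sndMarginal spread
  exact isClosed_le (by fun_prop) (by fun_prop)

lemma SimulatableCR.covBounded {Q : Bool × Bool → ℝ} (hQ : SimulatableCR Q) : CovBounded Q := by
  obtain ⟨f, g, hfg⟩ := hQ
  rw [tendsto_dTVCR_zero_iff] at hfg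
  refine isClosed_setOf_covBounded.mem_of_tendsto hfg (Eventually.of_forall fun d => ?_)
  rw [Set.mem_ofPred_eq, outDistCR_eq_condIndepDist]
  exact covBounded_condIndepDist (probTrue_mem_Icc _) (probTrue_mem_Icc _)

lemma exists_mul_eq_of_abs_le_mul {c x y : ℝ} (hx : 0 ≤ x) (hy : 0 ≤ y) (h : |c| ≤ x * y) :
    ∃ s t, |s| ≤ x ∧ |t| ≤ y ∧ s * t = c := by
  rcases hx.eq_or_lt with rfl | hx₀
  · exact ⟨0, 0, by simp, by simpa using hy, by simpa [eq_comm] using h⟩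
  refine ⟨x, c / x, (abs_of_pos hx₀).le, ?_, mul_div_cancel₀ c hx₀.ne'⟩
  rw [abs_div, abs_of_pos hx₀, div_le_iff₀ hx₀, mul_comm]
  exact h

lemma add_half_mem_Icc_of_abs_le_spread {a s : ℝ} (hs : |s| ≤ spread a) :
    a + s / 2 ∈ Set.Icc 0 1 ∧ a - s / 2 ∈ Set.Icc 0 1 := by
  rw [spread, abs_le] at hs
  have := min_le_left (2 * a) (2 * (1 - a))
  have := min_le_right (2 * a) (2 * (1 - a))
  exact ⟨⟨by linarith, by linarith⟩, by linarith, by linarith⟩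

lemma spread_nonneg {a : ℝ} (ha : a ∈ Set.Icc 0 1) : 0 ≤ spread a :=
  le_min (by linarith [ha.1]) (by linarith [ha.2])

lemma exists_condIndepDist_eq {Q : Bool × Bool → ℝ} (hpos : ∀ w, 0 ≤ Q w)
    (hsum : ∑ w, Q w = 1) (hQ : CovBounded Q) :
    ∃ p q : Bool → ℝ, (∀ z, p z ∈ Set.Icc 0 1) ∧ (∀ z, q z ∈ Set.Icc 0 1) ∧
      condIndepDist p q = Q := by
  simp only [Fintype.sum_prod_type, Fintype.sum_bool] at hsum
  have hfst : fstMarginal Q ∈ Set.Icc 0 1 := by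
    unfold fstMarginal
    exact ⟨by linarith [hpos (true, true), hpos (true, false)],
      by linarith [hpos (false, true), hpos (false, false)]⟩
  have hsnd : sndMarginal Q ∈ Set.Icc 0 1 := by
    unfold sndMarginal
    exact ⟨by linarith [hpos (true, true), hpos (false, true)],
      by linarith [hpos (true, false), hpos (false, false)]⟩
  obtain ⟨s, t, hs, ht, hst⟩ := exists_mul_eq_of_abs_le_mul (spread_nonneg hfst)
    (spread_nonneg hsnd) (c := 4 * (Q (true, true) - fstMarginal Q * sndMarginal Q))
    (by rw [abs_mul, abs_of_pos four_pos]; unfold CovBounded at hQ; linarith)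
  obtain ⟨hp₁, hp₂⟩ := add_half_mem_Icc_of_abs_le_spread hs
  obtain ⟨hq₁, hq₂⟩ := add_half_mem_Icc_of_abs_le_spread ht
  refine ⟨fun z => cond z (fstMarginal Q + s / 2) (fstMarginal Q - s / 2),
    fun z => cond z (sndMarginal Q + t / 2) (sndMarginal Q - t / 2),
    Bool.forall_bool.2 ⟨hp₂, hp₁⟩, Bool.forall_bool.2 ⟨hq₂, hq₁⟩, ?_⟩
  ext ⟨u, v⟩
  simp only [condIndepDist, bern, Fintype.sum_bool, cond_true, cond_false]
  unfold fstMarginal sndMarginal at hst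
  cases u <;> cases v <;> simp only [cond_true, cond_false, fstMarginal, sndMarginal]
  · linear_combination hst / 4 - hsum
  · linear_combination -hst / 4
  · linear_combination -hst / 4
  · linear_combination hst / 4

lemma exists_probTrue_eq (d : ℕ) (k : Bool → ℕ) (hk : ∀ z, k z ≤ 2 ^ d) :
    ∃ f : Bool × (Fin d → Bool) → Bool, ∀ z, probTrue f z = k z / 2 ^ d := by
  have hS : ∀ z, ∃ S : Finset (Fin d → Bool), #S = k z := fun z =>
    (exists_subset_card_eq (s := univ) (by simpa using hk z)).imp fun _ h => h.2
  choose S hS using hS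
  refine ⟨fun zx => decide (zx.2 ∈ S zx.1), fun z => ?_⟩
  simp [probTrue, hS]

lemma tendsto_floor_mul_two_pow_div {x : ℝ} (hx : 0 ≤ x) :
    Tendsto (fun d : ℕ => (⌊x * 2 ^ d⌋₊ : ℝ) / 2 ^ d) atTop (𝓝 x) :=
  (tendsto_nat_floor_mul_div_atTop hx).comp (tendsto_pow_atTop_atTop_of_one_lt one_lt_two)

lemma continuous_condIndepDist :
    Continuous fun pq : (Bool → ℝ) × (Bool → ℝ) => condIndepDist pq.1 pq.2 := by
  refine continuous_pi fun ⟨u, v⟩ => ?_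
  cases u <;> cases v <;> simp only [condIndepDist, bern, cond_true, cond_false] <;> fun_prop

lemma simulatableCR_condIndepDist {p q : Bool → ℝ} (hp : ∀ z, p z ∈ Set.Icc 0 1)
    (hq : ∀ z, q z ∈ Set.Icc 0 1) : SimulatableCR (condIndepDist p q) := by
  have hfloor : ∀ r ∈ Set.Icc (0 : ℝ) 1, ∀ d : ℕ, ⌊r * 2 ^ d⌋₊ ≤ 2 ^ d := fun r hr d =>
    Nat.floor_le_of_le (by exact_mod_cast mul_le_of_le_one_left (by positivity) hr.2)
  choose f hf using fun d => exists_probTrue_eq d (fun z => ⌊p z * 2 ^ d⌋₊)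
    fun z => hfloor _ (hp z) d
  choose g hg using fun d => exists_probTrue_eq d (fun z => ⌊q z * 2 ^ d⌋₊)
    fun z => hfloor _ (hq z) d
  have hf' : Tendsto (fun d => probTrue (f d)) atTop (𝓝 p) := tendsto_pi_nhds.2 fun z => by
    simpa [hf] using tendsto_floor_mul_two_pow_div (hp z).1
  have hg' : Tendsto (fun d => probTrue (g d)) atTop (𝓝 q) := tendsto_pi_nhds.2 fun z => by
    simpa [hg] using tendsto_floor_mul_two_pow_div (hq z).1
  refine ⟨f, g, (tendsto_dTVCR_zero_iff _ _).2 ?_⟩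
  simp_rw [outDistCR_eq_condIndepDist]
  simpa only [Function.comp_def] using
    (continuous_condIndepDist.tendsto (p, q)).comp (hf'.prodMk_nhds hg')

/-- With one shared uniform bit and unlimited local randomness, a binary-output
joint distribution `Q` with marginals `P(U=1)=a`, `P(V=1)=b` is simulatable iff
`(2−ζ−β)/2 ≤ Q(U=V) ≤ (2−ζ+β)/2`, where `ζ = 1−(2a−1)(2b−1)` and
`β = min{2a,2(1−a)}·min{2b,2(1−b)}`. -/
theorem stmt_14 (Q : Bool × Bool → ℝ) (hpos : ∀ z, 0 ≤ Q z)
    (h1 : ∑ z : Bool × Bool, Q z = 1)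
    (a b : ℝ) (ha : Q (true, true) + Q (true, false) = a)
    (hb : Q (true, true) + Q (false, true) = b) :
    SimulatableCR Q ↔
      ((2 - (1 - (2 * a - 1) * (2 * b - 1))
            - min (2 * a) (2 * (1 - a)) * min (2 * b) (2 * (1 - b))) / 2
          ≤ Q (true, true) + Q (false, false) ∧
        Q (true, true) + Q (false, false)
          ≤ (2 - (1 - (2 * a - 1) * (2 * b - 1))
            + min (2 * a) (2 * (1 - a)) * min (2 * b) (2 * (1 - b))) / 2) := by
  have hsum : Q (true, true) + Q (true, false) + Q (false, true) + Q (false, false) = 1 := by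
    simpa [Fintype.sum_prod_type, add_assoc] using h1
  have hsim : SimulatableCR Q ↔ CovBounded Q := by
    refine ⟨SimulatableCR.covBounded, fun hQ => ?_⟩
    obtain ⟨p, q, hp, hq, rfl⟩ := exists_condIndepDist_eq hpos h1 hQ
    exact simulatableCR_condIndepDist hp hq
  rw [hsim, CovBounded, fstMarginal, sndMarginal, ha, hb, abs_le, spread, spread]
  constructor <;> rintro ⟨hlo, hhi⟩ <;> constructor <;> linarith
end
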